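/- Suppose Conditional parallel trends with respect to the never-treated holds for the two events. Then the combined event satisfies the single-event never-treated parallel trends: for every g ∈ {2,…,T} with P(G=g) > 0 and P(G=∞) > 0, and every t with g ≤ t ≤ T, E[Y_t(0,0) − Y_{t−1}(0,0) | X, G=g] = E[Y_t(0,0) − Y_{t−1}(0,0) | X, G=∞] almost surely. -/

import Mathlib

/- Two-event staggered Difference-in-Differences setup (Callaway–Sant'Anna with a
confounding event).  Cohorts take values in `{2,…,T} ∪ {∞} ⊆ ℕ∞`; the potential-outcome
index `0 : ℕ∞` codes "never treated by that event". -/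

open MeasureTheory ProbabilityTheory

noncomputable section

namespace TwoEventDiD

variable {Ω : Type*} [MeasurableSpace Ω]

/-- Expectation of `Z` conditional on the event `A`: `E[Z | A]`. -/
def cE (μ : Measure Ω) (A : Set Ω) (Z : Ω → ℝ) : ℝ := ∫ ω, Z ω ∂(μ[|A])

/-- Probability of `B` conditional on the event `A`: `P(B | A)`. -/
def cP (μ : Measure Ω) (A B : Set Ω) : ℝ := (μ[|A] B).toReal

/-- `g` lies in `{2,…,T} ∪ {∞}`. -/
def InCohort (T : ℕ) (g : ℕ∞) : Prop := g = ⊤ ∨ ((2 : ℕ∞) ≤ g ∧ g ≤ (T : ℕ∞))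

/-- Realized outcome `Y_t := Y_t(G¹,G²)`. -/
def Yr (G1 G2 : Ω → ℕ∞) (Y : ℕ → ℕ∞ → ℕ∞ → Ω → ℝ) (t : ℕ) : Ω → ℝ :=
  fun ω => Y t (G1 ω) (G2 ω) ω

/-- Double-group-time average treatment effect
`ATT(g¹,g²,t) = E[Y_t(g¹,g²) − Y_t(0,0) | G¹=g¹, G²=g²]`. -/
def ATT (μ : Measure Ω) (G1 G2 : Ω → ℕ∞) (Y : ℕ → ℕ∞ → ℕ∞ → Ω → ℝ)
    (g1 g2 : ℕ∞) (t : ℕ) : ℝ :=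
  cE μ {ω | G1 ω = g1 ∧ G2 ω = g2} fun ω => Y t g1 g2 ω - Y t 0 0 ω

/-- Target (event-1) treatment effect
`ATT¹(g¹,g²,t) = E[Y_t(g¹,0) − Y_t(0,0) | G¹=g¹, G²=g²]`. -/
def ATT1 (μ : Measure Ω) (G1 G2 : Ω → ℕ∞) (Y : ℕ → ℕ∞ → ℕ∞ → Ω → ℝ)
    (g1 g2 : ℕ∞) (t : ℕ) : ℝ :=
  cE μ {ω | G1 ω = g1 ∧ G2 ω = g2} fun ω => Y t g1 0 ω - Y t 0 0 ω

/-- Confounding (event-2) treatment effect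
`ATT²(g¹,g²,t) = E[Y_t(0,g²) − Y_t(0,0) | G¹=g¹, G²=g²]`. -/
def ATT2 (μ : Measure Ω) (G1 G2 : Ω → ℕ∞) (Y : ℕ → ℕ∞ → ℕ∞ → Ω → ℝ)
    (g1 g2 : ℕ∞) (t : ℕ) : ℝ :=
  cE μ {ω | G1 ω = g1 ∧ G2 ω = g2} fun ω => Y t 0 g2 ω - Y t 0 0 ω

/-- No Anticipation (unconditional version): before `max(g¹,g²)` the mean outcome of
cohort `(g¹,g²)` coincides with the appropriate less-treated potential outcome. -/
def NoAnticipation (μ : Measure Ω) (G1 G2 : Ω → ℕ∞) (Y : ℕ → ℕ∞ → ℕ∞ → Ω → ℝ)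
    (T : ℕ) : Prop :=
  ∀ g1 g2 : ℕ∞, InCohort T g1 → InCohort T g2 →
    0 < μ {ω | G1 ω = g1 ∧ G2 ω = g2} →
    ∀ t : ℕ, 1 ≤ t → (t : ℕ∞) < max g1 g2 →
      ((t : ℕ∞) < min g1 g2 →
        cE μ {ω | G1 ω = g1 ∧ G2 ω = g2} (Y t g1 g2)
          = cE μ {ω | G1 ω = g1 ∧ G2 ω = g2} (Y t 0 0)) ∧
      (g1 ≤ (t : ℕ∞) ∧ (t : ℕ∞) < g2 →
        cE μ {ω | G1 ω = g1 ∧ G2 ω = g2} (Y t g1 g2)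
          = cE μ {ω | G1 ω = g1 ∧ G2 ω = g2} (Y t g1 0)) ∧
      (g2 ≤ (t : ℕ∞) ∧ (t : ℕ∞) < g1 →
        cE μ {ω | G1 ω = g1 ∧ G2 ω = g2} (Y t g1 g2)
          = cE μ {ω | G1 ω = g1 ∧ G2 ω = g2} (Y t 0 g2))


/-- The σ-algebra `σ(X)` generated by the covariates. -/
def mX {K : ℕ} (X : Ω → Fin K → ℝ) : MeasurableSpace Ω :=
  MeasurableSpace.comap X inferInstance

/-- Conditional No Anticipation (conditional on covariates `X`). -/
def CondNoAnticipation (μ : Measure Ω) (G1 G2 : Ω → ℕ∞) (Y : ℕ → ℕ∞ → ℕ∞ → Ω → ℝ)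
    (T : ℕ) {K : ℕ} (X : Ω → Fin K → ℝ) : Prop :=
  ∀ g1 g2 : ℕ∞, InCohort T g1 → InCohort T g2 →
    0 < μ {ω | G1 ω = g1 ∧ G2 ω = g2} →
    ∀ t : ℕ, 1 ≤ t → (t : ℕ∞) < max g1 g2 →
      ((t : ℕ∞) < min g1 g2 →
        (μ[|{ω | G1 ω = g1 ∧ G2 ω = g2}])[Y t g1 g2 | mX X]
          =ᵐ[μ[|{ω | G1 ω = g1 ∧ G2 ω = g2}]]
        (μ[|{ω | G1 ω = g1 ∧ G2 ω = g2}])[Y t 0 0 | mX X]) ∧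
      (g1 ≤ (t : ℕ∞) ∧ (t : ℕ∞) < g2 →
        (μ[|{ω | G1 ω = g1 ∧ G2 ω = g2}])[Y t g1 g2 | mX X]
          =ᵐ[μ[|{ω | G1 ω = g1 ∧ G2 ω = g2}]]
        (μ[|{ω | G1 ω = g1 ∧ G2 ω = g2}])[Y t g1 0 | mX X]) ∧
      (g2 ≤ (t : ℕ∞) ∧ (t : ℕ∞) < g1 →
        (μ[|{ω | G1 ω = g1 ∧ G2 ω = g2}])[Y t g1 g2 | mX X]
          =ᵐ[μ[|{ω | G1 ω = g1 ∧ G2 ω = g2}]]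
        (μ[|{ω | G1 ω = g1 ∧ G2 ω = g2}])[Y t 0 g2 | mX X])

/-- Conditional parallel trends with respect to the never-treated: a common measurable
function of the covariates is a version of both conditional mean untreated trends. -/
def CondPTNever (μ : Measure Ω) (G1 G2 : Ω → ℕ∞) (Y : ℕ → ℕ∞ → ℕ∞ → Ω → ℝ)
    (T : ℕ) {K : ℕ} (X : Ω → Fin K → ℝ) : Prop :=
  ∀ g1 g2 : ℕ∞, InCohort T g1 → InCohort T g2 → ¬(g1 = ⊤ ∧ g2 = ⊤) →
    0 < μ {ω | G1 ω = g1 ∧ G2 ω = g2} →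
    0 < μ {ω | G1 ω = ⊤ ∧ G2 ω = ⊤} →
    ∀ t : ℕ, min g1 g2 ≤ (t : ℕ∞) → t ≤ T →
      ∃ h : (Fin K → ℝ) → ℝ, Measurable h ∧
        (fun ω => h (X ω))
          =ᵐ[μ[|{ω | G1 ω = g1 ∧ G2 ω = g2}]]
          (μ[|{ω | G1 ω = g1 ∧ G2 ω = g2}])[fun ω => Y t 0 0 ω - Y (t - 1) 0 0 ω | mX X] ∧
        (fun ω => h (X ω))
          =ᵐ[μ[|{ω | G1 ω = ⊤ ∧ G2 ω = ⊤}]]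
          (μ[|{ω | G1 ω = ⊤ ∧ G2 ω = ⊤}])[fun ω => Y t 0 0 ω - Y (t - 1) 0 0 ω | mX X]

/-- Conditional parallel trends with respect to the not-yet-treated. -/
def CondPTNyt (μ : Measure Ω) (G1 G2 : Ω → ℕ∞) (Y : ℕ → ℕ∞ → ℕ∞ → Ω → ℝ)
    (T : ℕ) {K : ℕ} (X : Ω → Fin K → ℝ) : Prop :=
  ∀ g1 g2 : ℕ∞, InCohort T g1 → InCohort T g2 → ¬(g1 = ⊤ ∧ g2 = ⊤) →
    0 < μ {ω | G1 ω = g1 ∧ G2 ω = g2} →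
    ∀ s t : ℕ, min g1 g2 ≤ (t : ℕ∞) → t ≤ s → s ≤ T →
      0 < μ {ω | ¬ G1 ω ≤ (s : ℕ∞) ∧ ¬ G2 ω ≤ (s : ℕ∞) ∧ G1 ω ≠ g1 ∧ G2 ω ≠ g2} →
      ∃ h : (Fin K → ℝ) → ℝ, Measurable h ∧
        (fun ω => h (X ω))
          =ᵐ[μ[|{ω | G1 ω = g1 ∧ G2 ω = g2}]]
          (μ[|{ω | G1 ω = g1 ∧ G2 ω = g2}])[fun ω => Y t 0 0 ω - Y (t - 1) 0 0 ω | mX X] ∧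
        (fun ω => h (X ω))
          =ᵐ[μ[|{ω | ¬ G1 ω ≤ (s : ℕ∞) ∧ ¬ G2 ω ≤ (s : ℕ∞) ∧ G1 ω ≠ g1 ∧ G2 ω ≠ g2}]]
          (μ[|{ω | ¬ G1 ω ≤ (s : ℕ∞) ∧ ¬ G2 ω ≤ (s : ℕ∞) ∧ G1 ω ≠ g1 ∧ G2 ω ≠ g2}])[
            fun ω => Y t 0 0 ω - Y (t - 1) 0 0 ω | mX X]

end TwoEventDiD

open TwoEventDiD

/- The set `{G = g}` is the disjoint union of the finitely many cohorts `{G¹ = g¹, G² = g²}`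
with `min g¹ g² = g`. Each non-null cohort comes with a function `h_{g¹g²}` of the covariates
giving both its own conditional trend and that of the never-treated; hence all of them agree
with the never-treated regression function `φ` (`φ(X)` a version of the never-treated trend)
outside a set of covariate values that is null for the never-treated. On the remaining set
`S`, `φ(X)` is a version of every cohort's conditional trend, so, integrals being additive
over the disjoint cohorts, also of the trend conditional on `{G = g}`. Gluing `φ` on `S` with
any version for `{G = g}` off `S` gives the common version. -/

open Filter
open scoped ENNReal

section CondExp

variable {Ω : Type*} {m m₀ : MeasurableSpace Ω} {μ : Measure Ω} {Z f : Ω → ℝ}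

lemma condExp_smul_measure_ae_eq [IsFiniteMeasure μ] (hm : m ≤ m₀) {c : ℝ≥0∞} (hc₀ : c ≠ 0)
    (hc : c ≠ ∞) (Z : Ω → ℝ) : (c • μ)[Z | m] =ᵐ[μ] μ[Z | m] := by
  have := μ.smul_finite hc
  by_cases hZ : Integrable Z μ
  · refine ae_eq_condExp_of_forall_setIntegral_eq hm hZ
      (fun s _ _ => ((integrable_smul_measure hc₀ hc).1 integrable_condExp).integrableOn)
      (fun s hs _ => ?_) stronglyMeasurable_condExp.aestronglyMeasurable
    have h := setIntegral_condExp hm ((integrable_smul_measure hc₀ hc).2 hZ) hs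
    rw [Measure.restrict_smul, integral_smul_measure, integral_smul_measure] at h
    exact smul_right_injective ℝ (ENNReal.toReal_ne_zero.2 ⟨hc₀, hc⟩) h
  · rw [condExp_of_not_integrable hZ,
      condExp_of_not_integrable (mt (integrable_smul_measure hc₀ hc).1 hZ)]

lemma ae_eq_condExp_cond_iff [IsFiniteMeasure μ] (hm : m ≤ m₀) (A : Set Ω) :
    f =ᵐ[μ[|A]] (μ[|A])[Z | m] ↔ f =ᵐ[μ.restrict A] (μ.restrict A)[Z | m] := by
  rcases eq_or_ne (μ A) 0 with hA | hA
  · simp [cond_eq_zero_of_meas_eq_zero hA, Measure.restrict_eq_zero.2 hA]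
  have hc₀ : (μ A)⁻¹ ≠ 0 := ENNReal.inv_ne_zero.2 (measure_ne_top μ A)
  have hsmul := condExp_smul_measure_ae_eq (μ := μ.restrict A) hm hc₀ (ENNReal.inv_ne_top.2 hA) Z
  have hae : ae ((μ A)⁻¹ • μ.restrict A) = ae (μ.restrict A) :=
    Filter.ext fun s => by simp [mem_ae_iff, hc₀]
  rw [ProbabilityTheory.cond, EventuallyEq, hae]
  exact ⟨fun h => EventuallyEq.trans h hsmul, fun h => EventuallyEq.trans h hsmul.symm⟩

lemma ae_eq_condExp_restrict_biUnion [IsFiniteMeasure μ] (hm : m ≤ m₀) {ι : Type*}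
    {I : Finset ι} {A : ι → Set Ω} (hA : ∀ i ∈ I, MeasurableSet (A i))
    (hd : (I : Set ι).PairwiseDisjoint A) (hZ : Integrable Z μ) (hf : StronglyMeasurable[m] f)
    (hfA : ∀ i ∈ I, f =ᵐ[μ.restrict (A i)] (μ.restrict (A i))[Z | m]) :
    f =ᵐ[μ.restrict (⋃ i ∈ I, A i)] (μ.restrict (⋃ i ∈ I, A i))[Z | m] := by
  have hfA_int : ∀ i ∈ I, IntegrableOn f (A i) μ :=
    fun i hi => integrable_condExp.congr (hfA i hi).symm
  refine ae_eq_condExp_of_forall_setIntegral_eq hm hZ.restrict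
    (fun s _ _ => (integrableOn_finset_iUnion.2 hfA_int).integrableOn) (fun s hs _ => ?_)
    hf.aestronglyMeasurable
  have hs₀ := hm s hs
  rw [Measure.restrict_comm hs₀,
    integral_biUnion_finset I hA hd (fun i hi => (hfA_int i hi).restrict),
    integral_biUnion_finset I hA hd (fun i hi => hZ.integrableOn.restrict)]
  refine Finset.sum_congr rfl fun i hi => ?_
  rw [← Measure.restrict_comm hs₀, ← setIntegral_condExp hm hZ.restrict hs]
  exact setIntegral_congr_ae hs₀ ((hfA i hi).mono fun x hx _ => hx)

lemma ae_restrict_eq_condExp_restrict_biUnion [IsFiniteMeasure μ] (hm : m ≤ m₀) {ι : Type*}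
    {I : Finset ι} {A : ι → Set Ω} (hA : ∀ i ∈ I, MeasurableSet (A i))
    (hd : (I : Set ι).PairwiseDisjoint A) (hZ : Integrable Z μ) (hf : StronglyMeasurable[m] f)
    {W : Set Ω} (hW : MeasurableSet[m] W)
    (hfA : ∀ i ∈ I, f =ᵐ[(μ.restrict (A i)).restrict W] (μ.restrict (A i))[Z | m]) :
    f =ᵐ[(μ.restrict (⋃ i ∈ I, A i)).restrict W] (μ.restrict (⋃ i ∈ I, A i))[Z | m] := by
  have hW₀ := hm W hW
  refine EventuallyEq.trans ?_ (condExp_restrict_ae_eq_restrict hm hW hZ.restrict)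
  rw [Measure.restrict_comm hW₀]
  refine ae_eq_condExp_restrict_biUnion hm hA hd hZ.restrict hf fun i hi => ?_
  rw [← Measure.restrict_comm hW₀]
  exact (hfA i hi).trans (condExp_restrict_ae_eq_restrict hm hW hZ.restrict).symm

end CondExp

section CommonFactor

variable {Ω α ι : Type*} {m₀ : MeasurableSpace Ω} [MeasurableSpace α] {μ : Measure Ω}
  {X : Ω → α} {Z : Ω → ℝ}

local notation "σX" => MeasurableSpace.comap X ‹MeasurableSpace α›

theorem exists_common_factor_condExp_restrict_biUnion [IsFiniteMeasure μ] (hX : Measurable X)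
    (hZ : Integrable Z μ) {I : Finset ι} {A : ι → Set Ω} (hA : ∀ i ∈ I, MeasurableSet (A i))
    (hd : (I : Set ι).PairwiseDisjoint A) (V : Set Ω)
    (hfac : ∀ i ∈ I, μ (A i) ≠ 0 → ∃ h : α → ℝ, Measurable h ∧
      h ∘ X =ᵐ[μ.restrict (A i)] (μ.restrict (A i))[Z | σX] ∧
      h ∘ X =ᵐ[μ.restrict V] (μ.restrict V)[Z | σX]) :
    ∃ h : α → ℝ, Measurable h ∧
      h ∘ X =ᵐ[μ.restrict (⋃ i ∈ I, A i)] (μ.restrict (⋃ i ∈ I, A i))[Z | σX] ∧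
      h ∘ X =ᵐ[μ.restrict V] (μ.restrict V)[Z | σX] := by
  classical
  have hm : σX ≤ m₀ := hX.comap_le
  obtain ⟨φU, hφU, hφU_eq⟩ := (stronglyMeasurable_condExp (μ := μ.restrict (⋃ i ∈ I, A i))
    (f := Z) (m := σX)).measurable.exists_eq_measurable_comp
  obtain ⟨φV, hφV, hφV_eq⟩ := (stronglyMeasurable_condExp (μ := μ.restrict V)
    (f := Z) (m := σX)).measurable.exists_eq_measurable_comp
  have hfacV : ∀ i ∈ I, ∃ h : α → ℝ, Measurable h ∧
      h ∘ X =ᵐ[μ.restrict (A i)] (μ.restrict (A i))[Z | σX] ∧ h ∘ X =ᵐ[μ.restrict V] φV ∘ X := by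
    intro i hi
    rcases eq_or_ne (μ (A i)) 0 with h0 | h0
    · exact ⟨φV, hφV, by simp [Measure.restrict_eq_zero.2 h0, EventuallyEq], .rfl⟩
    · obtain ⟨h, hh, hhA, hhV⟩ := hfac i hi h0
      exact ⟨h, hh, hhA, hφV_eq ▸ hhV⟩
  choose! h hh hhA hhV using hfacV
  set S := ⋂ i ∈ I, {x | h i x = φV x}
  have hS : MeasurableSet S :=
    I.measurableSet_biInter fun i hi => measurableSet_eq_fun (hh i hi) hφV
  have hVS : ∀ᵐ ω ∂μ.restrict V, X ω ∈ S := by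
    simpa [S] using (eventually_all_finset I).2 hhV
  have hUS : φV ∘ X =ᵐ[(μ.restrict (⋃ i ∈ I, A i)).restrict (X ⁻¹' S)]
      (μ.restrict (⋃ i ∈ I, A i))[Z | σX] := by
    refine ae_restrict_eq_condExp_restrict_biUnion hm hA hd hZ
      (hφV.comp (comap_measurable X)).stronglyMeasurable ⟨S, hS, rfl⟩ fun i hi => ?_
    have hφV_h : φV ∘ X =ᵐ[(μ.restrict (A i)).restrict (X ⁻¹' S)] h i ∘ X :=
      ae_restrict_of_forall_mem (hX hS) fun ω hω => by
        simp only [S, Set.mem_preimage, Set.mem_iInter] at hω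
        exact (hω i hi).symm
    exact hφV_h.trans (ae_restrict_of_ae (hhA i hi))
  refine ⟨S.piecewise φV φU, hφV.piecewise hS hφU, ?_, ?_⟩
  · filter_upwards [(ae_restrict_iff' (hX hS)).1 hUS] with ω hω
    by_cases hωS : X ω ∈ S
    · rw [Function.comp_apply, Set.piecewise_eq_of_mem _ _ _ hωS]
      exact hω hωS
    · rw [Function.comp_apply, Set.piecewise_eq_of_notMem _ _ _ hωS, hφU_eq]
      rfl
  · filter_upwards [hVS] with ω hω
    rw [Function.comp_apply, Set.piecewise_eq_of_mem _ _ _ hω, hφV_eq]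
    rfl

end CommonFactor

lemma finite_setOf_inCohort (T : ℕ) : {g : ℕ∞ | InCohort T g}.Finite := by
  refine (((Set.finite_Iic T).image ((↑) : ℕ → ℕ∞)).insert ⊤).subset ?_
  rintro g (rfl | ⟨-, hgT⟩)
  · exact Set.mem_insert _ _
  · lift g to ℕ using ne_top_of_le_ne_top (ENat.natCast_ne_top T) hgT
    exact Or.inr ⟨g, by exact_mod_cast hgT, rfl⟩

theorem combined_event_parallel_trends_never_treated_general
    {Ω : Type*} [MeasurableSpace Ω] (μ : Measure Ω) [IsProbabilityMeasure μ]
    (T : ℕ)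
    (G1 G2 : Ω → ℕ∞) (Y : ℕ → ℕ∞ → ℕ∞ → Ω → ℝ)
    (hG1mem : ∀ ω, InCohort T (G1 ω)) (hG2mem : ∀ ω, InCohort T (G2 ω))
    (hmG1 : ∀ g : ℕ∞, MeasurableSet {ω | G1 ω = g})
    (hmG2 : ∀ g : ℕ∞, MeasurableSet {ω | G2 ω = g})
    (hYint : ∀ (t : ℕ) (g1 g2 : ℕ∞), Integrable (Y t g1 g2) μ)
    {K : ℕ} (X : Ω → Fin K → ℝ) (hX : Measurable X)
    (hPT : CondPTNever μ G1 G2 Y T X) :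
    ∀ g : ℕ, 2 ≤ g → g ≤ T →
      0 < μ {ω | min (G1 ω) (G2 ω) = (g : ℕ∞)} →
      0 < μ {ω | min (G1 ω) (G2 ω) = (⊤ : ℕ∞)} →
      ∀ t : ℕ, g ≤ t → t ≤ T →
        ∃ h : (Fin K → ℝ) → ℝ, Measurable h ∧
          (fun ω => h (X ω))
            =ᵐ[μ[|{ω | min (G1 ω) (G2 ω) = (g : ℕ∞)}]]
            (μ[|{ω | min (G1 ω) (G2 ω) = (g : ℕ∞)}])[
              fun ω => Y t 0 0 ω - Y (t - 1) 0 0 ω | mX X] ∧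
          (fun ω => h (X ω))
            =ᵐ[μ[|{ω | min (G1 ω) (G2 ω) = (⊤ : ℕ∞)}]]
            (μ[|{ω | min (G1 ω) (G2 ω) = (⊤ : ℕ∞)}])[
              fun ω => Y t 0 0 ω - Y (t - 1) 0 0 ω | mX X] := by
  intro g _ _ _ hVpos t hgt htT
  have hV : {ω | min (G1 ω) (G2 ω) = ⊤} = {ω | G1 ω = ⊤ ∧ G2 ω = ⊤} := by ext ω; simp
  have hI : ({p : ℕ∞ × ℕ∞ | InCohort T p.1 ∧ InCohort T p.2} ∩ {p | min p.1 p.2 = g}).Finite :=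
    ((finite_setOf_inCohort T).prod (finite_setOf_inCohort T)).inter_of_left _
  have hU : {ω | min (G1 ω) (G2 ω) = g} = ⋃ p ∈ hI.toFinset, {ω | G1 ω = p.1 ∧ G2 ω = p.2} := by
    ext ω; simp [hG1mem ω, hG2mem ω]
  have hm : mX X ≤ ‹MeasurableSpace Ω› := hX.comap_le
  have hZ : Integrable (fun ω => Y t 0 0 ω - Y (t - 1) 0 0 ω) μ :=
    (hYint t 0 0).sub (hYint (t - 1) 0 0)
  rw [hV] at hVpos
  rw [hV, hU]
  simp only [ae_eq_condExp_cond_iff hm]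
  refine exists_common_factor_condExp_restrict_biUnion hX hZ
    (fun p _ => (hmG1 p.1).inter (hmG2 p.2)) ?_ _ fun p hp hp0 => ?_
  · exact fun p _ q _ hpq => Set.disjoint_left.2 fun ω hp hq =>
      hpq (Prod.ext (hp.1.symm.trans hq.1) (hp.2.symm.trans hq.2))
  · obtain ⟨⟨hp1, hp2⟩, hmin⟩ := hI.mem_toFinset.1 hp
    have hp_top : ¬(p.1 = ⊤ ∧ p.2 = ⊤) := fun ⟨h1, h2⟩ => by simp [h1, h2] at hmin
    obtain ⟨h, hh, hpiece, hnever⟩ := hPT p.1 p.2 hp1 hp2 hp_top (pos_iff_ne_zero.2 hp0) hVpos t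
      (hmin.trans_le (by exact_mod_cast hgt)) htT
    exact ⟨h, hh, (ae_eq_condExp_cond_iff hm _).1 hpiece, (ae_eq_condExp_cond_iff hm _).1 hnever⟩

/-- Lemma 1, part CS4: conditional never-treated parallel trends for the
two events imply single-event never-treated parallel trends for the combined event. -/
theorem combined_event_parallel_trends_never_treated
    {Ω : Type*} [MeasurableSpace Ω] (μ : Measure Ω) [IsProbabilityMeasure μ]
    (T : ℕ) (hT : 2 ≤ T)
    (G1 G2 : Ω → ℕ∞) (Y : ℕ → ℕ∞ → ℕ∞ → Ω → ℝ)
    (hG1mem : ∀ ω, InCohort T (G1 ω)) (hG2mem : ∀ ω, InCohort T (G2 ω))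
    (hmG1 : ∀ g : ℕ∞, MeasurableSet {ω | G1 ω = g})
    (hmG2 : ∀ g : ℕ∞, MeasurableSet {ω | G2 ω = g})
    (hYint : ∀ (t : ℕ) (g1 g2 : ℕ∞), Integrable (Y t g1 g2) μ)
    (hYtop1 : ∀ (t : ℕ) (g2 : ℕ∞), Y t ⊤ g2 = Y t 0 g2)
    (hYtop2 : ∀ (t : ℕ) (g1 : ℕ∞), Y t g1 ⊤ = Y t g1 0)
    {K : ℕ} (X : Ω → Fin K → ℝ) (hX : Measurable X)
    (hPT : CondPTNever μ G1 G2 Y T X) :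
    ∀ g : ℕ, 2 ≤ g → g ≤ T →
      0 < μ {ω | min (G1 ω) (G2 ω) = (g : ℕ∞)} →
      0 < μ {ω | min (G1 ω) (G2 ω) = (⊤ : ℕ∞)} →
      ∀ t : ℕ, g ≤ t → t ≤ T →
        ∃ h : (Fin K → ℝ) → ℝ, Measurable h ∧
          (fun ω => h (X ω))
            =ᵐ[μ[|{ω | min (G1 ω) (G2 ω) = (g : ℕ∞)}]]
            (μ[|{ω | min (G1 ω) (G2 ω) = (g : ℕ∞)}])[
              fun ω => Y t 0 0 ω - Y (t - 1) 0 0 ω | mX X] ∧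
          (fun ω => h (X ω))
            =ᵐ[μ[|{ω | min (G1 ω) (G2 ω) = (⊤ : ℕ∞)}]]
            (μ[|{ω | min (G1 ω) (G2 ω) = (⊤ : ℕ∞)}])[
              fun ω => Y t 0 0 ω - Y (t - 1) 0 0 ω | mX X] :=
  combined_event_parallel_trends_never_treated_general μ T G1 G2 Y hG1mem hG2mem hmG1 hmG2 hYint X
    hX hPT
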